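/- Let d ≤ n be positive integers, σ > 0, U ∈ St(d,n), Σ ∈ SPD(d), μ ∈ ℝ^d and b ∈ ℝ^n, and set Σ̃ := ((1/σ²)(I_n − UUᵀ) + U Σ⁻¹ Uᵀ)⁻¹, μ̃ := Σ̃ U Σ⁻¹ μ + b. Then for every x ∈ ℝ^n: f(Uᵀ(x − b) | μ, Σ) · exp(−(1/(2σ²))‖(I_n − UUᵀ)(x − b)‖²) = (2πσ²)^{(n−d)/2} · f(x | μ̃, Σ̃). -/

import Mathlib

/-! With `Q = 1 - U Uᵀ`, the covariance `Σ̃ = σ² Q + U Σ Uᵀ` acts as `Σ` on the range of `U` and as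
`σ²` on its orthogonal complement, so `Σ̃⁻¹ = σ⁻² Q + U Σ⁻¹ Uᵀ` and `det Σ̃ = σ^(2(n-d)) det Σ`.
Moreover `μ̃ = U μ + b`, so `z = x - μ̃` satisfies `Uᵀ z = Uᵀ (x - b) - μ` and `Q z = Q (x - b)`:
the quadratic form of `Σ̃⁻¹` at `z` splits into exactly the two exponents on the left. -/

open Matrix

/-- The Gaussian density `f(x | μ, Σ)` in dimension `k`. -/
noncomputable def gaussDensity {k : ℕ} (x μ : Fin k → ℝ) (S : Matrix (Fin k) (Fin k) ℝ) : ℝ :=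
  (2 * Real.pi) ^ (-(k : ℝ) / 2) * S.det ^ (-(1 : ℝ) / 2) *
    Real.exp (-(1 / 2) * ((x - μ) ⬝ᵥ (S⁻¹ *ᵥ (x - μ))))

namespace Matrix

variable {m k : Type*} [Fintype k] [DecidableEq m] {U : Matrix m k ℝ}

def subspaceCov (c : ℝ) (U : Matrix m k ℝ) (S : Matrix k k ℝ) : Matrix m m ℝ :=
  c • (1 - U * Uᵀ) + U * S * Uᵀ

theorem transpose_one_sub_mul_transpose (U : Matrix m k ℝ) : (1 - U * Uᵀ)ᵀ = 1 - U * Uᵀ := by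
  rw [transpose_sub, transpose_one, transpose_mul, transpose_transpose]

variable [DecidableEq k]

theorem subspaceCov_one_one (U : Matrix m k ℝ) : subspaceCov 1 U 1 = 1 := by
  rw [subspaceCov, one_smul, Matrix.mul_one, sub_add_cancel]

variable [Fintype m]

theorem one_sub_mul_transpose_mul (hU : Uᵀ * U = 1) : (1 - U * Uᵀ) * U = 0 := by
  rw [Matrix.sub_mul, Matrix.one_mul, Matrix.mul_assoc, hU, Matrix.mul_one, sub_self]

theorem transpose_mul_one_sub_mul_transpose (hU : Uᵀ * U = 1) : Uᵀ * (1 - U * Uᵀ) = 0 := by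
  rw [Matrix.mul_sub, Matrix.mul_one, ← Matrix.mul_assoc, hU, Matrix.one_mul, sub_self]

theorem isIdempotentElem_one_sub_mul_transpose (hU : Uᵀ * U = 1) :
    IsIdempotentElem (1 - U * Uᵀ) := by
  rw [IsIdempotentElem, Matrix.mul_sub (1 - U * Uᵀ), ← Matrix.mul_assoc,
    one_sub_mul_transpose_mul hU, Matrix.zero_mul, Matrix.mul_one, sub_zero]

theorem subspaceCov_mul_subspaceCov (hU : Uᵀ * U = 1) (c c' : ℝ) (S S' : Matrix k k ℝ) :
    subspaceCov c U S * subspaceCov c' U S' = subspaceCov (c * c') U (S * S') := by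
  have hUSU : U * S * Uᵀ * (U * S' * Uᵀ) = U * (S * S') * Uᵀ := by
    simp only [Matrix.mul_assoc]
    rw [← Matrix.mul_assoc Uᵀ U, hU, Matrix.one_mul]
  have hQUSU : (1 - U * Uᵀ) * (U * S' * Uᵀ) = 0 := by
    rw [← Matrix.mul_assoc, ← Matrix.mul_assoc, one_sub_mul_transpose_mul hU, Matrix.zero_mul,
      Matrix.zero_mul]
  have hUSUQ : U * S * Uᵀ * (1 - U * Uᵀ) = 0 := by
    rw [Matrix.mul_assoc, transpose_mul_one_sub_mul_transpose hU, Matrix.mul_zero]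
  rw [subspaceCov, subspaceCov, subspaceCov, Matrix.add_mul, Matrix.mul_add, Matrix.mul_add,
    Matrix.smul_mul, Matrix.mul_smul, Matrix.smul_mul, Matrix.mul_smul, smul_smul,
    (isIdempotentElem_one_sub_mul_transpose hU).eq, hUSU, hQUSU, hUSUQ, smul_zero, smul_zero,
    add_zero, zero_add]

theorem inv_subspaceCov (hU : Uᵀ * U = 1) {c : ℝ} (hc : c ≠ 0) {S : Matrix k k ℝ}
    (hS : IsUnit S.det) : (subspaceCov c U S)⁻¹ = subspaceCov c⁻¹ U S⁻¹ := by
  apply inv_eq_right_inv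
  rw [subspaceCov_mul_subspaceCov hU, mul_inv_cancel₀ hc, mul_nonsing_inv S hS,
    subspaceCov_one_one]

theorem subspaceCov_mul_self (hU : Uᵀ * U = 1) (c : ℝ) (S : Matrix k k ℝ) :
    subspaceCov c U S * U = U * S := by
  rw [subspaceCov, Matrix.add_mul, Matrix.smul_mul, one_sub_mul_transpose_mul hU, smul_zero,
    zero_add, Matrix.mul_assoc, hU, Matrix.mul_one]

/-- Matrix determinant lemma: `subspaceCov c U S = c • (1 + U D)` with `D U = c⁻¹ • S - 1`. -/
theorem det_subspaceCov (hU : Uᵀ * U = 1) {c : ℝ} (hc : c ≠ 0) (S : Matrix k k ℝ) :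
    (subspaceCov c U S).det = c ^ Fintype.card m * (c ^ Fintype.card k)⁻¹ * S.det := by
  set D : Matrix k m ℝ := c⁻¹ • ((S - c • 1) * Uᵀ)
  have hUD : subspaceCov c U S = c • (1 + U * D) := by
    rw [subspaceCov, smul_add, Matrix.mul_smul, smul_smul, mul_inv_cancel₀ hc, one_smul,
      Matrix.sub_mul, Matrix.mul_sub, Matrix.smul_mul, Matrix.one_mul, Matrix.mul_smul,
      ← Matrix.mul_assoc, smul_sub]
    abel
  have hDU : 1 + D * U = c⁻¹ • S := by
    rw [Matrix.smul_mul, Matrix.mul_assoc, hU, Matrix.mul_one, smul_sub, smul_smul,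
      inv_mul_cancel₀ hc, one_smul]
    abel
  rw [hUD, det_smul, det_one_add_mul_comm, hDU, det_smul, inv_pow]
  ring

theorem dotProduct_subspaceCov_mulVec (hU : Uᵀ * U = 1) (c : ℝ) (S : Matrix k k ℝ) (z : m → ℝ) :
    z ⬝ᵥ (subspaceCov c U S *ᵥ z) =
      c * ((1 - U * Uᵀ) *ᵥ z) ⬝ᵥ ((1 - U * Uᵀ) *ᵥ z) + (Uᵀ *ᵥ z) ⬝ᵥ (S *ᵥ (Uᵀ *ᵥ z)) := by
  have hQ : ((1 - U * Uᵀ) *ᵥ z) ⬝ᵥ ((1 - U * Uᵀ) *ᵥ z) = z ⬝ᵥ ((1 - U * Uᵀ) *ᵥ z) := by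
    rw [dotProduct_mulVec, vecMul_mulVec, ← mulVec_transpose, transpose_mul, transpose_transpose,
      transpose_one_sub_mul_transpose, (isIdempotentElem_one_sub_mul_transpose hU).eq,
      dotProduct_comm]
  rw [hQ, subspaceCov, add_mulVec, smul_mulVec, dotProduct_add, dotProduct_smul, smul_eq_mul,
    ← mulVec_mulVec, ← mulVec_mulVec, dotProduct_mulVec z U, ← mulVec_transpose]

end Matrix

theorem gaussian_normalizer_rescale (n d : ℕ) {a c s : ℝ} (ha : 0 < a) (hc : 0 < c)
    (hs : 0 < s) :
    a ^ (-(d : ℝ) / 2) * s ^ (-(1 : ℝ) / 2) =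
      (a * c) ^ (((n : ℝ) - d) / 2) *
        (a ^ (-(n : ℝ) / 2) * (c ^ n * (c ^ d)⁻¹ * s) ^ (-(1 : ℝ) / 2)) := by
  have hcnd : c ^ n * (c ^ d)⁻¹ = c ^ ((n : ℝ) - d) := by
    rw [Real.rpow_sub hc, Real.rpow_natCast, Real.rpow_natCast, div_eq_mul_inv]
  have hexp_a : ((n : ℝ) - d) / 2 + -(n : ℝ) / 2 = -(d : ℝ) / 2 := by ring
  have hexp_c : ((n : ℝ) - d) / 2 + ((n : ℝ) - d) * (-1 / 2) = 0 := by ring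
  rw [hcnd, Real.mul_rpow (by positivity) hs.le, Real.mul_rpow ha.le hc.le,
    ← Real.rpow_mul hc.le]
  calc a ^ (-(d : ℝ) / 2) * s ^ (-(1 : ℝ) / 2)
      = a ^ (((n : ℝ) - d) / 2 + -(n : ℝ) / 2) *
          c ^ (((n : ℝ) - d) / 2 + ((n : ℝ) - d) * (-1 / 2)) * s ^ (-(1 : ℝ) / 2) := by
        rw [hexp_a, hexp_c, Real.rpow_zero, mul_one]
    _ = _ := by
        rw [Real.rpow_add ha, Real.rpow_add hc]
        ring

theorem stmt_5_general (d n : ℕ)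
    (σ : ℝ) (hσ : 0 < σ)
    (U : Matrix (Fin n) (Fin d) ℝ) (hU : Uᵀ * U = 1)
    (Sig : Matrix (Fin d) (Fin d) ℝ) (hSig : Sig.PosDef)
    (μ : Fin d → ℝ) (b : Fin n → ℝ)
    (tSig : Matrix (Fin n) (Fin n) ℝ)
    (htSig : tSig = ((σ ^ 2)⁻¹ • ((1 : Matrix (Fin n) (Fin n) ℝ) - U * Uᵀ) + U * Sig⁻¹ * Uᵀ)⁻¹)
    (tmu : Fin n → ℝ) (htmu : tmu = tSig *ᵥ (U *ᵥ (Sig⁻¹ *ᵥ μ)) + b)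
    (x : Fin n → ℝ) :
    gaussDensity (Uᵀ *ᵥ (x - b)) μ Sig *
        Real.exp (-(1 / (2 * σ ^ 2)) * ((((1 : Matrix (Fin n) (Fin n) ℝ) - U * Uᵀ) *ᵥ (x - b)) ⬝ᵥ
          (((1 : Matrix (Fin n) (Fin n) ℝ) - U * Uᵀ) *ᵥ (x - b))))
      = (2 * Real.pi * σ ^ 2) ^ (((n : ℝ) - (d : ℝ)) / 2) * gaussDensity x tmu tSig := by
  have hσ2 : 0 < σ ^ 2 := pow_pos hσ 2
  have hSdet : IsUnit Sig.det := hSig.isUnit.map detMonoidHom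
  have hcov : tSig = subspaceCov (σ ^ 2) U Sig := by
    rw [htSig, ← subspaceCov,
      inv_subspaceCov hU (inv_ne_zero hσ2.ne') (isUnit_nonsing_inv_det_iff.2 hSdet), inv_inv,
      nonsing_inv_nonsing_inv Sig hSdet]
  have hprec : tSig⁻¹ = subspaceCov (σ ^ 2)⁻¹ U Sig⁻¹ := by
    rw [hcov, inv_subspaceCov hU hσ2.ne' hSdet]
  have hmean : x - tmu = (x - b) - U *ᵥ μ := by
    rw [htmu, hcov, mulVec_mulVec, mulVec_mulVec, subspaceCov_mul_self hU,
      Matrix.mul_assoc, mul_nonsing_inv Sig hSdet, Matrix.mul_one]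
    abel
  have hrange : Uᵀ *ᵥ (x - tmu) = Uᵀ *ᵥ (x - b) - μ := by
    rw [hmean, mulVec_sub, mulVec_mulVec, hU, one_mulVec]
  have hcompl : (1 - U * Uᵀ) *ᵥ (x - tmu) = (1 - U * Uᵀ) *ᵥ (x - b) := by
    rw [hmean, mulVec_sub, mulVec_mulVec, one_sub_mul_transpose_mul hU, zero_mulVec, sub_zero]
  have hdet : tSig.det = (σ ^ 2) ^ n * ((σ ^ 2) ^ d)⁻¹ * Sig.det := by
    rw [hcov, det_subspaceCov hU hσ2.ne', Fintype.card_fin, Fintype.card_fin]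
  rw [gaussDensity, gaussDensity, hprec, dotProduct_subspaceCov_mulVec hU, hrange, hcompl, hdet,
    gaussian_normalizer_rescale n d Real.two_pi_pos hσ2 hSig.det_pos, mul_assoc, ← Real.exp_add,
    mul_assoc]
  congr 3
  field_simp
  ring

theorem stmt_5 (d n : ℕ) (hd : 0 < d) (hn : 0 < n) (hdn : d ≤ n)
    (σ : ℝ) (hσ : 0 < σ)
    (U : Matrix (Fin n) (Fin d) ℝ) (hU : Uᵀ * U = 1)
    (Sig : Matrix (Fin d) (Fin d) ℝ) (hSig : Sig.PosDef)
    (μ : Fin d → ℝ) (b : Fin n → ℝ)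
    (tSig : Matrix (Fin n) (Fin n) ℝ)
    (htSig : tSig = ((σ ^ 2)⁻¹ • ((1 : Matrix (Fin n) (Fin n) ℝ) - U * Uᵀ) + U * Sig⁻¹ * Uᵀ)⁻¹)
    (tmu : Fin n → ℝ) (htmu : tmu = tSig *ᵥ (U *ᵥ (Sig⁻¹ *ᵥ μ)) + b)
    (x : Fin n → ℝ) :
    gaussDensity (Uᵀ *ᵥ (x - b)) μ Sig *
        Real.exp (-(1 / (2 * σ ^ 2)) * ((((1 : Matrix (Fin n) (Fin n) ℝ) - U * Uᵀ) *ᵥ (x - b)) ⬝ᵥ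
          (((1 : Matrix (Fin n) (Fin n) ℝ) - U * Uᵀ) *ᵥ (x - b))))
      = (2 * Real.pi * σ ^ 2) ^ (((n : ℝ) - (d : ℝ)) / 2) * gaussDensity x tmu tSig :=
  stmt_5_general d n σ hσ U hU Sig hSig μ b tSig htSig tmu htmu x
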